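/- arXiv:1708.03787 — 2 statements merged into one kernel-verified Lean document; each statement's English description precedes it below -/
import Mathlib

section
/- Let Y, A be random variables with A ∈ {0,1}, X a random vector, π(X) = P(A=1|X) ≥ δ > 0 a.s., and m(X) = E[Y|A=1,X]. For any measurable function m̂ with E|m̂(X)| < ∞, E[m̂(X) + (A/π(X))(Y − m̂(X))] = E[m(X)]. That is, the AIPW functional is unbiased when the propensity score is correct, regardless of the outcome model m̂. -/
open MeasureTheory

/-!
Write `π = E[A | X]`. Since `m` and `m̂` are functions of `X`, the moment condition
`E[A (Y - m) | X] = 0` gives `E[A (Y - m̂) | X] = (m - m̂) π`. Pulling the `X`-measurable weight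
`1/π` (bounded by `1/δ`) out of the conditional expectation then turns
`E[(A/π)(Y - m̂)]` into `E[m - m̂]`, and the `m̂` terms cancel.
-/

section

variable {Ω : Type*} {m m₀ : MeasurableSpace Ω} {μ : Measure Ω}

lemma integrable_of_le_condExp [NeZero μ] {f : Ω → ℝ} {δ : ℝ} (hδ : 0 < δ)
    (hf : ∀ᵐ ω ∂μ, δ ≤ μ[f | m] ω) : Integrable f μ := by
  by_contra hf_int
  rw [condExp_of_not_integrable hf_int] at hf
  obtain ⟨ω, hω⟩ := hf.exists
  exact hδ.not_ge hω

lemma integral_mul_condExp_of_bound [IsFiniteMeasure μ] (hm : m ≤ m₀) {f g : Ω → ℝ}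
    (hf : StronglyMeasurable[m] f) (hg : Integrable g μ) (c : ℝ)
    (hf_bound : ∀ᵐ ω ∂μ, ‖f ω‖ ≤ c) :
    ∫ ω, f ω * μ[g | m] ω ∂μ = ∫ ω, f ω * g ω ∂μ := by
  calc ∫ ω, f ω * μ[g | m] ω ∂μ = ∫ ω, μ[f * g | m] ω ∂μ :=
        integral_congr_ae (condExp_stronglyMeasurable_mul_of_bound hm hf hg c hf_bound).symm
    _ = ∫ ω, f ω * g ω ∂μ := integral_condExp hm

lemma condExp_mul_sub_of_condExp_mul_sub_eq_zero {A Y g h : Ω → ℝ} (c : ℝ)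
    (hA : Integrable A μ) (hA_bound : ∀ᵐ ω ∂μ, ‖A ω‖ ≤ c)
    (hg : StronglyMeasurable[m] g) (hh : StronglyMeasurable[m] h)
    (hg_int : Integrable g μ) (hh_int : Integrable h μ)
    (hAYh : Integrable (fun ω => A ω * (Y ω - h ω)) μ)
    (hAYg : μ[fun ω => A ω * (Y ω - g ω) | m] =ᵐ[μ] 0) :
    μ[fun ω => A ω * (Y ω - h ω) | m] =ᵐ[μ] (g - h) * μ[A | m] := by
  have hgh_A : Integrable ((g - h) * A) μ :=
    (hg_int.sub hh_int).mul_bdd hA.aestronglyMeasurable hA_bound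
  have hsplit : (fun ω => A ω * (Y ω - h ω)) = (fun ω => A ω * (Y ω - g ω)) + (g - h) * A := by
    ext ω; simp only [Pi.add_apply, Pi.mul_apply, Pi.sub_apply]; ring
  have hAYg_int : Integrable (fun ω => A ω * (Y ω - g ω)) μ := by
    refine (hAYh.sub hgh_A).congr (ae_of_all μ fun ω => ?_)
    simp only [Pi.sub_apply, Pi.mul_apply]
    ring
  rw [hsplit]
  filter_upwards [condExp_add hAYg_int hgh_A m, hAYg,
    condExp_mul_of_stronglyMeasurable_left (hg.sub hh) hgh_A hA] with ω h₁ h₂ h₃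
  simp only [h₁, Pi.add_apply, h₂, h₃, Pi.zero_apply, zero_add]

lemma norm_inv_condExp_le {A : Ω → ℝ} {δ : ℝ} (hδ : 0 < δ) (hδA : ∀ᵐ ω ∂μ, δ ≤ μ[A | m] ω) :
    ∀ᵐ ω ∂μ, ‖(μ[A | m] ω)⁻¹‖ ≤ δ⁻¹ := by
  filter_upwards [hδA] with ω h
  rw [norm_inv, Real.norm_of_nonneg (hδ.le.trans h)]
  exact inv_anti₀ hδ h

lemma stronglyMeasurable_inv_condExp {A : Ω → ℝ} :
    StronglyMeasurable[m] fun ω => (μ[A | m] ω)⁻¹ :=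
  stronglyMeasurable_condExp.measurable.inv.stronglyMeasurable

lemma integrable_inv_condExp_mul (hm : m ≤ m₀) {A Z : Ω → ℝ} {δ : ℝ} (hδ : 0 < δ)
    (hδA : ∀ᵐ ω ∂μ, δ ≤ μ[A | m] ω) (hZ : Integrable Z μ) :
    Integrable (fun ω => (μ[A | m] ω)⁻¹ * Z ω) μ :=
  hZ.bdd_mul (stronglyMeasurable_inv_condExp.mono hm).aestronglyMeasurable
    (norm_inv_condExp_le hδ hδA)

lemma integral_inv_condExp_mul [IsFiniteMeasure μ] (hm : m ≤ m₀) {A Z W : Ω → ℝ} {δ : ℝ}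
    (hδ : 0 < δ) (hδA : ∀ᵐ ω ∂μ, δ ≤ μ[A | m] ω) (hZ : Integrable Z μ)
    (hZW : μ[Z | m] =ᵐ[μ] W * μ[A | m]) :
    ∫ ω, (μ[A | m] ω)⁻¹ * Z ω ∂μ = ∫ ω, W ω ∂μ := by
  rw [← integral_mul_condExp_of_bound hm stronglyMeasurable_inv_condExp hZ _
    (norm_inv_condExp_le hδ hδA)]
  refine integral_congr_ae ?_
  filter_upwards [hZW, hδA] with ω h₁ h₂
  rw [h₁, Pi.mul_apply]
  field_simp [(hδ.trans_le h₂).ne']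

end

theorem stmt1_general
    {Ω : Type*} {F : MeasurableSpace Ω} (μ : Measure Ω) [IsProbabilityMeasure μ]
    (mΩ : MeasurableSpace Ω) (hle : mΩ ≤ F)
    (A Y πX mX mhat : Ω → ℝ)
    (hA01 : ∀ ω, A ω = 0 ∨ A ω = 1)
    (hπ : πX =ᵐ[μ] μ[A | mΩ])
    (δ : ℝ) (hδ : 0 < δ) (hπδ : ∀ᵐ ω ∂μ, δ ≤ πX ω)
    (hmX_meas : StronglyMeasurable[mΩ] mX)
    (hm : μ[fun ω => A ω * (Y ω - mX ω) | mΩ] =ᵐ[μ] 0)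
    (hmhat_meas : StronglyMeasurable[mΩ] mhat)
    (hint_mhat : Integrable mhat μ)
    (hint_m : Integrable mX μ)
    (hint_AY : Integrable (fun ω => A ω * (Y ω - mhat ω)) μ) :
    ∫ ω, (mhat ω + A ω / πX ω * (Y ω - mhat ω)) ∂μ = ∫ ω, mX ω ∂μ := by
  have hA_bound : ∀ᵐ ω ∂μ, ‖A ω‖ ≤ 1 :=
    ae_of_all μ fun ω => by rcases hA01 ω with h | h <;> simp [h]
  have hδπ : ∀ᵐ ω ∂μ, δ ≤ μ[A | mΩ] ω := by
    filter_upwards [hπ, hπδ] with ω h₁ h₂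
    rwa [← h₁]
  have hA : Integrable A μ := integrable_of_le_condExp hδ hδπ
  have hipw : (fun ω => A ω / πX ω * (Y ω - mhat ω)) =ᵐ[μ]
      fun ω => (μ[A | mΩ] ω)⁻¹ * (A ω * (Y ω - mhat ω)) := by
    filter_upwards [hπ] with ω h
    rw [h, div_eq_inv_mul, mul_assoc]
  have hres : μ[fun ω => A ω * (Y ω - mhat ω) | mΩ] =ᵐ[μ] (mX - mhat) * μ[A | mΩ] :=
    condExp_mul_sub_of_condExp_mul_sub_eq_zero 1 hA hA_bound hmX_meas hmhat_meas
      hint_m hint_mhat hint_AY hm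
  rw [integral_add hint_mhat ((integrable_inv_condExp_mul hle hδ hδπ hint_AY).congr hipw.symm),
    integral_congr_ae hipw, integral_inv_condExp_mul hle hδ hδπ hint_AY hres,
    integral_sub' hint_m hint_mhat]
  ring

/-- Double robustness w.r.t. the propensity score: for an arbitrary integrable outcome model
`m̂(X)` (σ(X)-measurable), `E[m̂(X) + (A/π(X))(Y − m̂(X))] = E[m(X)]` when `π` is the true
propensity score `P(A=1|X) = E[A|X]` (as `A ∈ {0,1}`) and `m(X) = E[Y|A=1,X]` is the true
conditional outcome mean, characterized by `E[A·(Y − mX) | X] = 0`. -/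
theorem stmt1
    {Ω : Type*} {F : MeasurableSpace Ω} (μ : Measure Ω) [IsProbabilityMeasure μ]
    (mΩ : MeasurableSpace Ω) (hle : mΩ ≤ F)
    (A Y πX mX mhat : Ω → ℝ)
    (hA01 : ∀ ω, A ω = 0 ∨ A ω = 1)
    (hπ : πX =ᵐ[μ] μ[A | mΩ])
    (δ : ℝ) (hδ : 0 < δ) (hπδ : ∀ᵐ ω ∂μ, δ ≤ πX ω)
    (hmX_meas : StronglyMeasurable[mΩ] mX)
    (hm : μ[fun ω => A ω * (Y ω - mX ω) | mΩ] =ᵐ[μ] 0)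
    (hmhat_meas : StronglyMeasurable[mΩ] mhat)
    (hint_mhat : Integrable mhat μ)
    (hint_m : Integrable mX μ)
    (hint_AY : Integrable (fun ω => A ω * (Y ω - mhat ω)) μ)
    (hint_U : Integrable (fun ω => mhat ω + A ω / πX ω * (Y ω - mhat ω)) μ) :
    ∫ ω, (mhat ω + A ω / πX ω * (Y ω - mhat ω)) ∂μ = ∫ ω, mX ω ∂μ :=
  stmt1_general μ mΩ hle A Y πX mX mhat hA01 hπ δ hδ hπδ hmX_meas hm hmhat_meas hint_mhat hint_m
    hint_AY
end

section
/- Let Y, A be random variables with A ∈ {0,1}, X a random vector, and m(X) = E[Y|A=1,X]. For any measurable function π̂ with π̂(X) ≥ δ > 0 a.s., E[m(X) + (A/π̂(X))(Y − m(X))] = E[m(X)]. That is, the AIPW functional is unbiased when the outcome model is correct, regardless of the propensity score model π̂. -/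
open MeasureTheory

/-- Double robustness w.r.t. the outcome regression: for an arbitrary σ(X)-measurable
propensity model `π̂(X) ≥ δ > 0`, `E[m(X) + (A/π̂(X))(Y − m(X))] = E[m(X)]` when
`m(X) = E[Y|A=1,X]` is the true conditional outcome mean, characterized by
`E[A·(Y − mX) | X] = 0`. -/
theorem stmt2
    {Ω : Type*} {F : MeasurableSpace Ω} (μ : Measure Ω) [IsProbabilityMeasure μ]
    (mΩ : MeasurableSpace Ω) (hle : mΩ ≤ F)
    (A Y πhat mX : Ω → ℝ)
    (hA01 : ∀ ω, A ω = 0 ∨ A ω = 1)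
    (hπhat_meas : StronglyMeasurable[mΩ] πhat)
    (δ : ℝ) (hδ : 0 < δ) (hπδ : ∀ᵐ ω ∂μ, δ ≤ πhat ω)
    (hmX_meas : StronglyMeasurable[mΩ] mX)
    (hm : μ[fun ω => A ω * (Y ω - mX ω) | mΩ] =ᵐ[μ] 0)
    (hint_m : Integrable mX μ)
    (hint_AY : Integrable (fun ω => A ω * (Y ω - mX ω)) μ)
    (hint_U : Integrable (fun ω => mX ω + A ω / πhat ω * (Y ω - mX ω)) μ) :
    ∫ ω, (mX ω + A ω / πhat ω * (Y ω - mX ω)) ∂μ = ∫ ω, mX ω ∂μ := by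
  have heq : (fun ω => mX ω + A ω / πhat ω * (Y ω - mX ω))
      = fun ω => mX ω + (πhat ω)⁻¹ * (A ω * (Y ω - mX ω)) := by
    funext ω; ring
  have hint_g : Integrable (fun ω => (πhat ω)⁻¹ * (A ω * (Y ω - mX ω))) μ := by
    have := hint_U.sub hint_m
    refine this.congr (Filter.Eventually.of_forall fun ω => ?_)
    simp only [Pi.sub_apply]; ring
  rw [heq, integral_add hint_m hint_g]
  have hpull := condExp_mul_of_stronglyMeasurable_left (μ := μ) (hπhat_meas.measurable.inv.stronglyMeasurable) hint_g hint_AY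
  have h0 : ∫ ω, (πhat ω)⁻¹ * (A ω * (Y ω - mX ω)) ∂μ = 0 := by
    rw [← integral_condExp hle]
    have : μ[fun ω => (πhat ω)⁻¹ * (A ω * (Y ω - mX ω)) | mΩ] =ᵐ[μ] 0 := by
      refine hpull.trans ?_
      filter_upwards [hm] with ω hω
      simp [hω]
    rw [integral_congr_ae this]
    simp
  rw [h0, add_zero]
end
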